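/- arXiv:1302.0658 — 7 statements merged into one kernel-verified Lean document; each statement's English description precedes it below -/
import Mathlib

section
/- Let M be a cancellative monoid, let K and H be finite subgroups of M, and let m ∈ M satisfy Km ⊆ mH. Then the set K̄ := {h ∈ H | mh ∈ Km} is a subgroup of H and Km = mK̄. -/
/-- `mulLeft m S = mS = {m*s | s ∈ S}`. -/
def mulLeft {M : Type*} [Monoid M] (m : M) (S : Set M) : Set M := (m * ·) '' S

/-- `mulRight S m = Sm = {s*m | s ∈ S}`. -/
def mulRight {M : Type*} [Monoid M] (S : Set M) (m : M) : Set M := (· * m) '' S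

/-- A subset of a monoid which is a subgroup: it contains `1`, is closed under
multiplication, and every element has a (two-sided) inverse inside the set. -/
def IsSubgroupSet {M : Type*} [Monoid M] (S : Set M) : Prop :=
  (1 : M) ∈ S ∧ (∀ a ∈ S, ∀ b ∈ S, a * b ∈ S) ∧ (∀ a ∈ S, ∃ b ∈ S, a * b = 1 ∧ b * a = 1)

/-- A finite subgroup of a monoid. -/
def IsFiniteSubgroup {M : Type*} [Monoid M] (S : Set M) : Prop :=
  IsSubgroupSet S ∧ S.Finite

/-- if `K, H` are finite subgroups of a cancellative monoid `M` and
`Km ⊆ mH`, then `K̄ = {h ∈ H | mh ∈ Km}` is a subgroup of `H` and `Km = mK̄`. -/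
theorem stmt2 {M : Type*} [CancelMonoid M] (K H : Set M)
    (hK : IsFiniteSubgroup K) (hH : IsFiniteSubgroup H)
    (m : M) (hm : mulRight K m ⊆ mulLeft m H) :
    {h : M | h ∈ H ∧ m * h ∈ mulRight K m} ⊆ H ∧
    IsSubgroupSet {h : M | h ∈ H ∧ m * h ∈ mulRight K m} ∧
    mulRight K m = mulLeft m {h : M | h ∈ H ∧ m * h ∈ mulRight K m} := by
  obtain ⟨⟨hK1, hKmul, hKinv⟩, -⟩ := hK
  obtain ⟨⟨hH1, hHmul, hHinv⟩, -⟩ := hH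
  refine ⟨fun h hh => hh.1, ⟨⟨hH1, ⟨1, hK1, by simp⟩⟩, ?_, ?_⟩, ?_⟩
  · rintro a ⟨haH, k₁, hk₁, hk₁e⟩ b ⟨hbH, k₂, hk₂, hk₂e⟩
    refine ⟨hHmul a haH b hbH, k₁ * k₂, hKmul _ hk₁ _ hk₂, ?_⟩
    simp only at hk₁e hk₂e ⊢
    rw [mul_assoc, hk₂e, ← mul_assoc, hk₁e, mul_assoc]
  · rintro a ⟨haH, k, hk, hke⟩
    simp only at hke
    obtain ⟨k', hk', hkk', hk'k⟩ := hKinv k hk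
    obtain ⟨a', ha', haa', ha'a⟩ := hHinv a haH
    refine ⟨a', ⟨ha', k', hk', ?_⟩, haa', ha'a⟩
    -- show k' * m = m * a'
    have : k' * (m * a) = m := by rw [← hke, ← mul_assoc, hk'k, one_mul]
    have h2 : (k' * m) * a = m * 1 := by rw [mul_assoc, this, mul_one]
    calc k' * m = (k' * m) * a * a' := by rw [mul_assoc, haa', mul_one]
      _ = m * 1 * a' := by rw [h2]
      _ = m * a' := by rw [mul_one]
  · ext x
    constructor
    · rintro ⟨k, hk, rfl⟩
      obtain ⟨h, hh, he⟩ := hm ⟨k, hk, rfl⟩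
      exact ⟨h, ⟨hh, k, hk, he.symm⟩, he⟩
    · rintro ⟨h, ⟨hhH, k, hk, he⟩, rfl⟩
      exact ⟨k, hk, he⟩
end

section
/- Let G be a group, χ : G → (ℝ, +) a nonzero homomorphism, G̃ ≤ G a subgroup, and N a normal subgroup of G with N ⊆ ker χ ∩ G̃. Assume that G̃_χ := G̃ ∩ G_χ ⊆ N_G(K)·N for every finite subgroup K of G̃. Then G̃_χ conjugates finite subgroups: whenever H₁, H₂ are finite subgroups of G̃ and g ∈ G̃_χ satisfies H₁g = gH₂, there exists h ∈ ker χ ∩ G̃ with h⁻¹H₁h = H₂. -/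
/-! Writing `g = a * n` with `a` normalizing `H₁` and `n ∈ N`, conjugation by `n` acts on `H₁`
exactly as conjugation by `g`, and `H₁ g = g H₂` says that the latter carries `H₁` onto `H₂`. -/

open Set Subgroup

theorem image_conj_eq_of_image_mul_right_eq {G : Type*} [Group G] {s t : Set G} {g : G}
    (h : (· * g) '' s = (g * ·) '' t) : (fun a => g⁻¹ * a * g) '' s = t := by
  calc (fun a => g⁻¹ * a * g) '' s = (g⁻¹ * ·) '' ((· * g) '' s) := by
        rw [image_image]; simp only [mul_assoc]
    _ = t := by rw [h, image_image]; simp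

theorem image_conj_mul_of_mem_normalizer {G : Type*} [Group G] {s : Set G} {a : G}
    (ha : a ∈ normalizer s) (n : G) :
    (fun x => (a * n)⁻¹ * x * (a * n)) '' s = (fun x => n⁻¹ * x * n) '' s := by
  have hconj : MulAut.conj a⁻¹ '' s = s := mem_normalizer_iff_conj_image_eq.1 (inv_mem ha)
  calc (fun x => (a * n)⁻¹ * x * (a * n)) '' s
      = (fun x => n⁻¹ * x * n) '' (MulAut.conj a⁻¹ '' s) := by
        rw [image_image]; simp only [MulAut.conj_apply, inv_inv, mul_inv_rev, mul_assoc]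
    _ = (fun x => n⁻¹ * x * n) '' s := by rw [hconj]

theorem stmt7_general {G : Type*} [Group G] (χ : G → ℝ)
    (Gt : Subgroup G) (N : Subgroup G)
    (hNker : ∀ n ∈ N, χ n = 0) (hNle : N ≤ Gt)
    (hyp : ∀ K : Subgroup G, (K : Set G).Finite → K ≤ Gt →
      ∀ g ∈ Gt, 0 ≤ χ g → ∃ a ∈ Subgroup.normalizer (K : Set G), ∃ n ∈ N, g = a * n) :
    ∀ H₁ H₂ : Subgroup G, (H₁ : Set G).Finite → (H₂ : Set G).Finite →
      H₁ ≤ Gt → H₂ ≤ Gt → ∀ g ∈ Gt, 0 ≤ χ g →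
        (· * g) '' (H₁ : Set G) = (g * ·) '' (H₂ : Set G) →
        ∃ h ∈ Gt, χ h = 0 ∧ (fun a => h⁻¹ * a * h) '' (H₁ : Set G) = (H₂ : Set G) := by
  intro H₁ H₂ hH₁ _ hH₁le _ g hg hχg hcoset
  obtain ⟨a, ha, n, hn, rfl⟩ := hyp H₁ hH₁ hH₁le g hg hχg
  refine ⟨n, hNle hn, hNker n hn, ?_⟩
  rw [← image_conj_mul_of_mem_normalizer ha n]
  exact image_conj_eq_of_image_mul_right_eq hcoset

/-- let `χ : G → (ℝ, +)` be a nonzero homomorphism, `G̃ ≤ G` a subgroup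
and `N ⊴ G` with `N ⊆ ker χ ∩ G̃`.  If `G̃_χ ⊆ N_G(K)·N` for every finite subgroup `K`
of `G̃`, then `G̃_χ` conjugates finite subgroups: whenever `H₁, H₂` are finite subgroups
of `G̃` and `g ∈ G̃_χ` satisfies `H₁g = gH₂`, there is `h ∈ ker χ ∩ G̃` with `h⁻¹H₁h = H₂`. -/
theorem stmt7 {G : Type*} [Group G] (χ : G → ℝ)
    (hhom : ∀ a b : G, χ (a * b) = χ a + χ b) (hne : ∃ g : G, χ g ≠ 0)
    (Gt : Subgroup G) (N : Subgroup G) (hNnorm : N.Normal)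
    (hNker : ∀ n ∈ N, χ n = 0) (hNle : N ≤ Gt)
    (hyp : ∀ K : Subgroup G, (K : Set G).Finite → K ≤ Gt →
      ∀ g ∈ Gt, 0 ≤ χ g → ∃ a ∈ Subgroup.normalizer (K : Set G), ∃ n ∈ N, g = a * n) :
    ∀ H₁ H₂ : Subgroup G, (H₁ : Set G).Finite → (H₂ : Set G).Finite →
      H₁ ≤ Gt → H₂ ≤ Gt → ∀ g ∈ Gt, 0 ≤ χ g →
        (· * g) '' (H₁ : Set G) = (g * ·) '' (H₂ : Set G) →
        ∃ h ∈ Gt, χ h = 0 ∧ (fun a => h⁻¹ * a * h) '' (H₁ : Set G) = (H₂ : Set G) :=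
  stmt7_general χ Gt N hNker hNle hyp
end

section
/- Let G be a group, χ : G → (ℝ, +) a nonzero homomorphism, and M = G_χ. Then the following are equivalent: (a) for all finite subgroups K and H of G, the set [M/K, M/H] is finitely generated as a W_MK-set; (b) for every finite subgroup K of G, at least one of the following holds: (i) χ(N_G(K)) = {0}; (ii) χ(N_G(K)) is an infinite cyclic subgroup of (ℝ, +); (iii) χ(N_G(K)) = χ(G). -/
/-- `[M/K, M/H]` for `M = G_χ`: the set of cosets `mH` with `m ∈ G_χ` and `Km ⊆ mH`. -/
def morSetChi {G : Type*} [Group G] (χ : G → ℝ) (K H : Set G) : Set (Set G) :=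
  {X | ∃ m : G, 0 ≤ χ m ∧ X = (m * ·) '' H ∧ (· * m) '' K ⊆ (m * ·) '' H}

/-- Representatives of elements of `W_MK = {xK | x ∈ G_χ, Kx = xK}` for `M = G_χ`. -/
def weylChi {G : Type*} [Group G] (χ : G → ℝ) (K : Set G) : Set G :=
  {x | 0 ≤ χ x ∧ (· * x) '' K = (x * ·) '' K}

/-- `Ω` is finitely generated as a `W_MK`-set: `Ω = W_MK · F` for a finite `F ⊆ Ω`. -/
def IsFGWChi {G : Type*} [Group G] (χ : G → ℝ) (K : Set G) (Ω : Set (Set G)) : Prop :=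
  ∃ F : Set (Set G), F.Finite ∧ F ⊆ Ω ∧
    Ω = {X | ∃ x ∈ weylChi χ K, ∃ Y ∈ F, X = (x * ·) '' Y}

/-!
Write `N = N_G(K)`. A coset `mH` lies in `[M/K, M/H]` iff `m⁻¹Km ≤ H`, and `m⁻¹Km = m'⁻¹Km'` iff
`m m'⁻¹ ∈ N`; so on the cosets over a fixed conjugate of `K` the monoid `W_MK` acts by left
multiplication with `N ∩ G_χ`, which can only raise the height `χ(m)` of `mH`.

Since the finite group `H` has finitely many subgroups, `[M/K, M/H]` is finitely generated as soon
as `χ` attains a minimum on each `N m ∩ G_χ`; each of (i)–(iii) guarantees this.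

If none of (i)–(iii) holds, `χ(N)` is a dense subgroup of `ℝ` missing some `χ(g)`. For
`H = g⁻¹Kg` the cosets in `[M/K, M/H]` are the `mH` with `m ∈ N g` and `χ(m) ≥ 0`: their heights
lie in `χ(N) + χ(g)`, hence are positive, yet come arbitrarily close to `0`. A finite generating
set would bound them below by its least height.
-/

open Set Subgroup

section Conjugation

variable {G : Type*} [Group G]

lemma image_mul_right_subset_image_mul_left_iff {K H : Subgroup G} {m : G} :
    (· * m) '' (K : Set G) ⊆ (m * ·) '' (H : Set G) ↔ K.map (MulAut.conj m⁻¹ : G →* G) ≤ H := by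
  rw [image_subset_iff, image_mul_left, map_le_iff_le_comap]
  simp [SetLike.le_def, Set.subset_def, mul_assoc]

lemma image_mul_right_eq_image_mul_left_iff {K : Subgroup G} {x : G} :
    (· * x) '' (K : Set G) = (x * ·) '' (K : Set G) ↔ x ∈ normalizer (K : Set G) := by
  rw [image_mul_left, image_mul_right, ← inv_mem_iff, mem_normalizer_iff', Set.ext_iff]
  exact forall_congr' fun _ => Iff.rfl

lemma map_conj_inv_eq_map_conj_inv_iff {K : Subgroup G} {m m' : G} :
    K.map (MulAut.conj m⁻¹ : G →* G) = K.map (MulAut.conj m'⁻¹ : G →* G) ↔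
      m * m'⁻¹ ∈ normalizer (K : Set G) := by
  have hm : (MulAut.conj m : G →* G).comp (MulAut.conj m⁻¹) = MonoidHom.id G := by
    ext; simp [mul_assoc]
  have hm' : (MulAut.conj m : G →* G).comp (MulAut.conj m'⁻¹) =
      (MulAut.conj (m * m'⁻¹) : G →* G) := by
    ext; simp [mul_assoc]
  rw [mem_normalizer_iff_map_conj_eq,
    ← (map_injective (f := (MulAut.conj m : G →* G)) (MulAut.conj m).injective).eq_iff,
    map_map, map_map, hm, hm', map_id, eq_comm]

lemma map_conj_inv_le_map_conj_inv_iff {K : Subgroup G} (hK : (K : Set G).Finite) {m m' : G} :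
    K.map (MulAut.conj m⁻¹ : G →* G) ≤ K.map (MulAut.conj m'⁻¹ : G →* G) ↔
      m * m'⁻¹ ∈ normalizer (K : Set G) := by
  rw [← map_conj_inv_eq_map_conj_inv_iff]
  refine ⟨fun hle => ?_, fun h => h.le⟩
  have : Finite (K.map (MulAut.conj m'⁻¹ : G →* G)) := by
    rw [← SetLike.coe_sort_coe, coe_map]
    exact (hK.image _).to_subtype
  refine eq_of_le_of_card_ge hle ?_
  rw [card_map_of_injective (MulAut.conj _).injective,
    card_map_of_injective (MulAut.conj _).injective]

lemma image_mul_left_eq_iff {H : Subgroup G} {m m' : G} :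
    (m * ·) '' (H : Set G) = (m' * ·) '' (H : Set G) ↔ m⁻¹ * m' ∈ H :=
  leftCoset_eq_iff H

lemma image_mul_left_image_mul_left (x m : G) (s : Set G) :
    (x * ·) '' ((m * ·) '' s) = (x * m * ·) '' s := by
  simp only [image_image, mul_assoc]

lemma mem_weylChi_iff {χ : G → ℝ} {K : Subgroup G} {x : G} :
    x ∈ weylChi χ (K : Set G) ↔ 0 ≤ χ x ∧ x ∈ normalizer (K : Set G) :=
  and_congr_right' image_mul_right_eq_image_mul_left_iff

end Conjugation

lemma Set.Finite.exists_pos_forall_le {s : Set ℝ} (hs : s.Finite) (hpos : ∀ x ∈ s, 0 < x) :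
    ∃ ε > 0, ∀ x ∈ s, ε ≤ x := by
  obtain ⟨ε, hε, hmin⟩ := exists_min_image (insert 1 s) id (hs.insert 1) (insert_nonempty 1 s)
  refine ⟨ε, ?_, fun x hx => hmin x (Or.inr hx)⟩
  rcases hε with rfl | hε
  exacts [one_pos, hpos ε hε]

lemma exists_isLeast_int_mul_inter_Ici {r : ℝ} (hr : 0 < r) (c : ℝ) :
    ∃ s, IsLeast ({y | ∃ n : ℤ, y = n * r} ∩ Ici c) s := by
  refine ⟨⌈c / r⌉ * r, ⟨⟨_, rfl⟩, (div_le_iff₀ hr).mp (Int.le_ceil _)⟩, ?_⟩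
  rintro _ ⟨⟨n, rfl⟩, hn⟩
  have : ⌈c / r⌉ ≤ n := Int.ceil_le.mpr ((div_le_iff₀ hr).mpr hn)
  exact mul_le_mul_of_nonneg_right (by exact_mod_cast this) hr.le

lemma setOf_eq_int_mul_abs (r : ℝ) :
    {y | ∃ n : ℤ, y = n * r} = {y | ∃ n : ℤ, y = n * |r|} := by
  rcases abs_choice r with h | h
  · rw [h]
  · rw [h]
    ext y
    constructor <;> rintro ⟨n, rfl⟩ <;> exact ⟨-n, by push_cast; ring⟩

lemma exists_isLeast_inter_Ici {S : Set ℝ} {c : ℝ} (hc : c ≤ 0)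
    (hS : S = {0} ∨ (∃ r : ℝ, r ≠ 0 ∧ S = {y | ∃ n : ℤ, y = n * r}) ∨ c ∈ S) :
    ∃ s, IsLeast (S ∩ Ici c) s := by
  rcases hS with rfl | ⟨r, hr, rfl⟩ | hcS
  · exact ⟨0, ⟨rfl, hc⟩, fun y hy => hy.1.ge⟩
  · rw [setOf_eq_int_mul_abs]
    exact exists_isLeast_int_mul_inter_Ici (abs_pos.mpr hr) c
  · exact ⟨c, ⟨hcS, self_mem_Ici⟩, fun y hy => hy.2⟩

namespace RealCharacter

variable {G : Type*} [Group G] {χ : G → ℝ} (hχ : ∀ a b : G, χ (a * b) = χ a + χ b)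
include hχ

lemma map_one : χ 1 = 0 := by
  have := hχ 1 1
  rw [one_mul] at this
  linarith

lemma map_inv (g : G) : χ g⁻¹ = -χ g := by
  have := hχ g⁻¹ g
  rw [inv_mul_cancel, map_one hχ] at this
  linarith

lemma map_mul_inv (a b : G) : χ (a * b⁻¹) = χ a - χ b := by
  rw [hχ, map_inv hχ, sub_eq_add_neg]

lemma map_eq_zero_of_isOfFinOrder {g : G} (hg : IsOfFinOrder g) : χ g = 0 :=
  congrArg Multiplicative.toAdd
    ((MonoidHom.mk' (fun g => Multiplicative.ofAdd (χ g)) hχ).isOfFinOrder hg).eq_one'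

lemma map_eq_of_image_mul_left_eq {H : Subgroup G} (hH : (H : Set G).Finite) {m m' : G}
    (h : (m * ·) '' (H : Set G) = (m' * ·) '' (H : Set G)) : χ m = χ m' := by
  have : Finite H := hH.to_subtype
  have h0 : χ (m⁻¹ * m') = 0 := map_eq_zero_of_isOfFinOrder hχ
    (H.subtype.isOfFinOrder (isOfFinOrder_of_finite ⟨_, image_mul_left_eq_iff.mp h⟩))
  rw [← mul_inv_cancel_left m m', hχ, h0, add_zero]

lemma dense_image_of_ne_zmultiples (S : Subgroup G) (h0 : χ '' S ≠ {0})
    (hcyc : ∀ r : ℝ, r ≠ 0 → χ '' S ≠ {y | ∃ n : ℤ, y = n * r}) : Dense (χ '' S) := by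
  let A : AddSubgroup ℝ :=
    { carrier := χ '' S
      add_mem' := by
        rintro _ _ ⟨a, ha, rfl⟩ ⟨b, hb, rfl⟩
        exact ⟨a * b, mul_mem ha hb, hχ a b⟩
      zero_mem' := ⟨1, one_mem S, map_one hχ⟩
      neg_mem' := by
        rintro _ ⟨a, ha, rfl⟩
        exact ⟨a⁻¹, inv_mem ha, map_inv hχ a⟩ }
  refine A.dense_or_cyclic.resolve_right ?_
  rintro ⟨r, hr⟩
  have hA : χ '' S = {y | ∃ n : ℤ, y = n * r} := by
    ext y
    change y ∈ A ↔ _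
    simp [hr, AddSubgroup.mem_closure_singleton, zsmul_eq_mul, eq_comm]
  rcases eq_or_ne r 0 with rfl | hr0
  · exact h0 (by simpa using hA)
  · exact hcyc r hr0 hA

lemma exists_min_mul_mem_of_isLeast {N : Subgroup G} {m₀ : G}
    (h : ∃ s, IsLeast (χ '' N ∩ Ici (-χ m₀)) s) :
    ∃ m₁, 0 ≤ χ m₁ ∧ m₁ * m₀⁻¹ ∈ N ∧ ∀ m, 0 ≤ χ m → m * m₀⁻¹ ∈ N → χ m₁ ≤ χ m := by
  obtain ⟨_, ⟨⟨n, hn, rfl⟩, hnc⟩, hleast⟩ := h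
  refine ⟨n * m₀, ?_, by rwa [mul_inv_cancel_right], fun m hm hmN => ?_⟩
  · rw [hχ]
    exact neg_le_iff_add_nonneg.mp hnc
  · have := hleast ⟨⟨_, hmN, rfl⟩, ?_⟩
    · rw [map_mul_inv hχ] at this
      rw [hχ]
      linarith
    · rw [mem_Ici, map_mul_inv hχ]
      linarith

lemma isFGWChi_morSetChi_of_exists_isLeast {K H : Subgroup G} (hH : (H : Set G).Finite)
    (hleast : ∀ m₀ : G, 0 ≤ χ m₀ →
      ∃ s, IsLeast (χ '' normalizer (K : Set G) ∩ Ici (-χ m₀)) s) :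
    IsFGWChi χ (K : Set G) (morSetChi χ (K : Set G) (H : Set G)) := by
  set T : Set G := {m | 0 ≤ χ m ∧ K.map (MulAut.conj m⁻¹ : G →* G) ≤ H}
  set cls : G → Subgroup G := fun m => K.map (MulAut.conj m⁻¹ : G →* G)
  have hfin : (cls '' T).Finite :=
    (hH.finite_subsets.preimage SetLike.coe_injective.injOn).subset
      (by rintro _ ⟨m, hm, rfl⟩; exact hm.2)
  have hmin : ∀ L ∈ cls '' T, ∃ m₁ ∈ T, cls m₁ = L ∧ ∀ m ∈ T, cls m = L → χ m₁ ≤ χ m := by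
    rintro _ ⟨m₀, hm₀, rfl⟩
    obtain ⟨m₁, hm₁, hN, hle⟩ := exists_min_mul_mem_of_isLeast hχ (hleast m₀ hm₀.1)
    have hcls : cls m₁ = cls m₀ := map_conj_inv_eq_map_conj_inv_iff.mpr hN
    exact ⟨m₁, ⟨hm₁, hcls.le.trans hm₀.2⟩, hcls,
      fun m hm hcls' => hle m hm.1 (map_conj_inv_eq_map_conj_inv_iff.mp hcls')⟩
  choose! rep hrepT hrepcls hrepmin using hmin
  refine ⟨(fun L => (rep L * ·) '' (H : Set G)) '' (cls '' T), hfin.image _, ?_, ?_⟩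
  · rintro _ ⟨L, hL, rfl⟩
    exact ⟨rep L, (hrepT L hL).1, rfl,
      image_mul_right_subset_image_mul_left_iff.mpr (hrepT L hL).2⟩
  ext X
  constructor
  · rintro ⟨m, hm₀, rfl, hm⟩
    have hmT : m ∈ T := ⟨hm₀, image_mul_right_subset_image_mul_left_iff.mp hm⟩
    have hL : cls m ∈ cls '' T := mem_image_of_mem cls hmT
    refine ⟨m * (rep (cls m))⁻¹, mem_weylChi_iff.mpr ⟨?_, ?_⟩, _, mem_image_of_mem _ hL, ?_⟩
    · rw [map_mul_inv hχ]
      linarith [hrepmin _ hL m hmT rfl]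
    · exact map_conj_inv_eq_map_conj_inv_iff.mp (hrepcls _ hL).symm
    · rw [image_mul_left_image_mul_left, inv_mul_cancel_right]
  · rintro ⟨x, hx, _, ⟨L, hL, rfl⟩, rfl⟩
    obtain ⟨hx₀, hxN⟩ := mem_weylChi_iff.mp hx
    have hcls : cls (x * rep L) = cls (rep L) :=
      map_conj_inv_eq_map_conj_inv_iff.mpr (by rwa [mul_inv_cancel_right])
    rw [image_mul_left_image_mul_left]
    exact ⟨x * rep L, by rw [hχ]; linarith [(hrepT L hL).1], rfl,
      image_mul_right_subset_image_mul_left_iff.mpr (hcls.le.trans (hrepT L hL).2)⟩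

lemma exists_pos_forall_le_of_isFGWChi {K H : Subgroup G} (hH : (H : Set G).Finite)
    {Ω : Set (Set G)} (hΩ : Ω ⊆ range fun m => (m * ·) '' (H : Set G))
    (hpos : ∀ m, (m * ·) '' (H : Set G) ∈ Ω → 0 < χ m) (hfg : IsFGWChi χ (K : Set G) Ω) :
    ∃ ε > 0, ∀ m, (m * ·) '' (H : Set G) ∈ Ω → ε ≤ χ m := by
  obtain ⟨F, hF, hFΩ, hΩF⟩ := hfg
  choose! rep hrep using fun Y (hY : Y ∈ F) => hΩ (hFΩ hY)
  obtain ⟨ε, hε, hle⟩ := (hF.image (χ ∘ rep)).exists_pos_forall_le <| by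
    rintro _ ⟨Y, hY, rfl⟩
    have hYΩ := hFΩ hY
    rw [← hrep Y hY] at hYΩ
    exact hpos _ hYΩ
  refine ⟨ε, hε, fun m hm => ?_⟩
  rw [hΩF] at hm
  obtain ⟨x, hx, Y, hY, hmY⟩ := hm
  rw [← hrep Y hY, image_mul_left_image_mul_left] at hmY
  rw [map_eq_of_image_mul_left_eq hχ hH hmY, hχ]
  linarith [hx.1, hle (χ (rep Y)) ⟨Y, hY, rfl⟩]

lemma exists_not_isFGWChi_morSetChi {K : Subgroup G} (hK : (K : Set G).Finite) {g : G}
    (hdense : Dense (χ '' normalizer (K : Set G)))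
    (hg : χ g ∉ χ '' normalizer (K : Set G)) :
    ∃ H : Subgroup G, (H : Set G).Finite ∧
      ¬ IsFGWChi χ (K : Set G) (morSetChi χ (K : Set G) (H : Set G)) := by
  set H := K.map (MulAut.conj g⁻¹ : G →* G)
  have hH : (H : Set G).Finite := by
    rw [coe_map]
    exact hK.image _
  have hmem : ∀ m, (· * m) '' (K : Set G) ⊆ (m * ·) '' (H : Set G) ↔
      m * g⁻¹ ∈ normalizer (K : Set G) := fun m =>
    image_mul_right_subset_image_mul_left_iff.trans (map_conj_inv_le_map_conj_inv_iff hK)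
  have hpos : ∀ m, (m * ·) '' (H : Set G) ∈ morSetChi χ K H → 0 < χ m := by
    rintro m ⟨m', hm'₀, hmm', hm'⟩
    rw [map_eq_of_image_mul_left_eq hχ hH hmm']
    refine hm'₀.lt_of_ne fun h₀ => hg ⟨(m' * g⁻¹)⁻¹, inv_mem ((hmem m').mp hm'), ?_⟩
    rw [map_inv hχ, map_mul_inv hχ, ← h₀]
    ring
  refine ⟨H, hH, fun hfg => ?_⟩
  obtain ⟨ε, hε, hle⟩ := exists_pos_forall_le_of_isFGWChi hχ hH
    (by rintro _ ⟨m, -, rfl, -⟩; exact ⟨m, rfl⟩) hpos hfg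
  obtain ⟨_, ⟨n, hn, rfl⟩, hlo, hhi⟩ := hdense.exists_mem_open isOpen_Ioo
    (nonempty_Ioo.mpr (show -χ g < ε - χ g by linarith))
  have hng := hle (n * g) ⟨n * g, by rw [hχ]; linarith, rfl,
    (hmem _).mpr (by rwa [mul_inv_cancel_right])⟩
  rw [hχ] at hng
  linarith

end RealCharacter

open RealCharacter in
theorem stmt8_general {G : Type*} [Group G] (χ : G → ℝ)
    (hhom : ∀ a b : G, χ (a * b) = χ a + χ b) :
    (∀ K H : Subgroup G, (K : Set G).Finite → (H : Set G).Finite →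
        IsFGWChi χ (K : Set G) (morSetChi χ (K : Set G) (H : Set G))) ↔
    (∀ K : Subgroup G, (K : Set G).Finite →
        (χ '' (Subgroup.normalizer (K : Set G) : Set G) = {0}) ∨
        (∃ r : ℝ, r ≠ 0 ∧ χ '' (Subgroup.normalizer (K : Set G) : Set G) = {y : ℝ | ∃ n : ℤ, y = n * r}) ∨
        (χ '' (Subgroup.normalizer (K : Set G) : Set G) = Set.range χ)) := by
  constructor
  · intro hfg K hK
    by_contra hcond
    obtain ⟨hzero, hcyc, hrange⟩ := not_or.mp hcond |>.imp_right not_or.mp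
    obtain ⟨_, ⟨g, rfl⟩, hg⟩ := exists_of_ssubset ((image_subset_range χ _).ssubset_of_ne hrange)
    have hdense := dense_image_of_ne_zmultiples hhom _ hzero fun r hr h => hcyc ⟨r, hr, h⟩
    obtain ⟨H, hH, hnfg⟩ := exists_not_isFGWChi_morSetChi hhom hK hdense hg
    exact hnfg (hfg K H hK hH)
  · intro hcond K H hK hH
    refine isFGWChi_morSetChi_of_exists_isLeast hhom hH fun m₀ hm₀ =>
      exists_isLeast_inter_Ici (neg_nonpos.mpr hm₀) ?_
    refine (hcond K hK).imp_right (Or.imp_right fun h => ?_)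
    rw [h, ← map_inv hhom]
    exact mem_range_self m₀⁻¹

/-- for `M = G_χ`, all the `W_MK`-sets `[M/K, M/H]` (for `K, H` finite
subgroups of `G`) are finitely generated iff for every finite subgroup `K` of `G` one of
the following holds: `χ(N_G(K)) = 0`, `χ(N_G(K))` is infinite cyclic, or
`χ(N_G(K)) = χ(G)`. -/
theorem stmt8 {G : Type*} [Group G] (χ : G → ℝ)
    (hhom : ∀ a b : G, χ (a * b) = χ a + χ b) (hne : ∃ g : G, χ g ≠ 0) :
    (∀ K H : Subgroup G, (K : Set G).Finite → (H : Set G).Finite →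
        IsFGWChi χ (K : Set G) (morSetChi χ (K : Set G) (H : Set G))) ↔
    (∀ K : Subgroup G, (K : Set G).Finite →
        (χ '' (Subgroup.normalizer (K : Set G) : Set G) = {0}) ∨
        (∃ r : ℝ, r ≠ 0 ∧ χ '' (Subgroup.normalizer (K : Set G) : Set G) = {y : ℝ | ∃ n : ℤ, y = n * r}) ∨
        (χ '' (Subgroup.normalizer (K : Set G) : Set G) = Set.range χ)) :=
  stmt8_general χ hhom
end

section
/- Let G be a finitely generated group, let G' be its commutator subgroup, and let N be the subgroup of G containing G' such that N/G' is the torsion subgroup of G/G'. Then the following are equivalent: (a) for every nonzero homomorphism χ : G → (ℝ, +) and every finite subgroup K of G, at least one of χ(N_G(K)) = {0}, χ(N_G(K)) is infinite cyclic, or χ(N_G(K)) = χ(G) holds; (b) for every finite subgroup K of G, at least one of the following holds: (i) N_G(K) ⊆ N; (ii) the image of N_G(K) in G/N is infinite cyclic; (iii) N_G(K)·N = G. -/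
/-!
A homomorphism `χ : G → ℝ` kills the commutator subgroup, hence also `N`, so it factors through
`G ⧸ N`. Under (b) this makes `χ(N_G(K))` equal to `{0}`, the cyclic group `ℤ χ(a₀)` for a lift
`a₀` of the generator, or `χ(G)`.
Conversely, `G ⧸ N` is the abelianization modulo its torsion, a free abelian group of finite
rank, and it embeds into `(ℝ, +)` because `ℝ` has infinite rank over `ℚ`. The resulting `χ` has
kernel exactly `N`, and for it the three alternatives of (a) become the three of (b).
-/

open QuotientGroup

theorem exists_linearIndependent_int_real (ι : Type*) [Countable ι] :
    ∃ v : ι → ℝ, LinearIndependent ℤ v := by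
  let b := Module.Free.chooseBasis ℚ ℝ
  have hcard : Cardinal.lift.{0} (Cardinal.mk ι) ≤
      Cardinal.lift (Cardinal.mk (Module.Free.ChooseBasisIndex ℚ ℝ)) := by
    rw [← Module.Free.rank_eq_card_chooseBasisIndex, Real.rank_rat_real, Cardinal.lift_continuum]
    exact (Cardinal.lift_le_aleph0.mpr Cardinal.mk_le_aleph0).trans Cardinal.aleph0_le_continuum
  obtain ⟨e⟩ := Cardinal.lift_mk_le'.mp hcard
  exact ⟨b ∘ e, (b.linearIndependent.comp e e.injective).restrict_scalars' ℤ⟩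

theorem Module.exists_injective_linearMap_int_real (A : Type*) [AddCommGroup A] [Module.Free ℤ A]
    [Module.Finite ℤ A] : ∃ f : A →ₗ[ℤ] ℝ, Function.Injective f := by
  let b := Module.Free.chooseBasis ℤ A
  obtain ⟨v, hv⟩ := exists_linearIndependent_int_real (Module.Free.ChooseBasisIndex ℤ A)
  have hv' : Function.Injective (Finsupp.linearCombination ℤ v) := hv
  exact ⟨Finsupp.linearCombination ℤ v ∘ₗ b.repr.toLinearMap, hv'.comp b.repr.injective⟩

theorem Abelianization.of_mem_torsion_iff {G : Type*} [Group G] (g : G) :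
    of g ∈ CommGroup.torsion (Abelianization G) ↔ ∃ n : ℕ, 0 < n ∧ g ^ n ∈ commutator G := by
  simp only [CommGroup.mem_torsion, isOfFinOrder_iff_pow_eq_one, ← map_pow, ← MonoidHom.mem_ker,
    ker_of]

def IsRealCharacter {G : Type*} [Group G] (χ : G → ℝ) : Prop :=
  ∀ a b : G, χ (a * b) = χ a + χ b

namespace IsRealCharacter

variable {G : Type*} [Group G] {χ : G → ℝ} (hχ : IsRealCharacter χ)
include hχ

theorem map_one : χ 1 = 0 := by
  simpa using hχ 1 1

theorem map_zpow (g : G) (n : ℤ) : χ (g ^ n) = n * χ g := by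
  simpa using map_zsmul (AddMonoidHom.mk' (χ ∘ Additive.toMul) fun a b => hχ a.toMul b.toMul) n
    (Additive.ofMul g)

theorem comp {G' : Type*} [Group G'] (f : G' →* G) : IsRealCharacter (χ ∘ f) := fun a b => by
  simp only [Function.comp_apply, map_mul, hχ _ _]

theorem map_inv_mul (a b : G) : χ (a⁻¹ * b) = χ b - χ a := by
  rw [hχ, ← zpow_neg_one, hχ.map_zpow]
  ring

theorem map_eq_zero_of_mem_commutator {g : G} (hg : g ∈ commutator G) : χ g = 0 := by
  let ψ : G →* Multiplicative ℝ := MonoidHom.mk' (fun g => .ofAdd (χ g)) hχ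
  exact congrArg Multiplicative.toAdd (Abelianization.commutator_subset_ker ψ hg)

theorem map_eq_zero_of_pow_mem_commutator {g : G} {n : ℕ} (hn : 0 < n)
    (hg : g ^ n ∈ commutator G) : χ g = 0 := by
  have := hχ.map_zpow g n
  rw [zpow_natCast, hχ.map_eq_zero_of_mem_commutator hg, eq_comm, mul_eq_zero] at this
  exact this.resolve_left (by positivity)

variable {N : Subgroup G} {H : Subgroup G}

section KernelContains

variable (hN : ∀ g ∈ N, χ g = 0)
include hN

theorem map_eq_map_of_mk_eq {a b : G} (h : (a : G ⧸ N) = b) : χ a = χ b := by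
  rw [eq_comm, ← sub_eq_zero, ← hχ.map_inv_mul]
  exact hN _ (QuotientGroup.eq.mp h)

theorem image_eq_zero_of_le (h : H ≤ N) : χ '' H = {0} := by
  refine Set.eq_singleton_iff_unique_mem.mpr ⟨⟨1, H.one_mem, hχ.map_one⟩, ?_⟩
  rintro _ ⟨a, ha, rfl⟩
  exact hN a (h ha)

theorem exists_image_eq_of_map_eq_zpowers [N.Normal] {z : G ⧸ N}
    (h : H.map (mk' N) = Subgroup.zpowers z) :
    ∃ r : ℝ, χ '' H = {y | ∃ n : ℤ, y = n * r} := by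
  obtain ⟨a₀, ha₀, rfl⟩ : z ∈ H.map (mk' N) := h ▸ Subgroup.mem_zpowers z
  refine ⟨χ a₀, Set.ext fun y => ⟨?_, ?_⟩⟩
  · rintro ⟨a, ha, rfl⟩
    obtain ⟨n, hn⟩ := Subgroup.mem_zpowers_iff.mp (h ▸ Subgroup.mem_map_of_mem (mk' N) ha)
    exact ⟨n, by rw [← hχ.map_zpow, hχ.map_eq_map_of_mk_eq hN (a := a₀ ^ n) (by simpa using hn)]⟩
  · rintro ⟨n, rfl⟩
    exact ⟨a₀ ^ n, H.zpow_mem ha₀ n, hχ.map_zpow a₀ n⟩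

theorem image_eq_range_of_forall_eq_mul (h : ∀ g : G, ∃ a ∈ H, ∃ n ∈ N, g = a * n) :
    χ '' H = Set.range χ := by
  refine (Set.image_subset_range _ _).antisymm ?_
  rintro _ ⟨g, rfl⟩
  obtain ⟨a, ha, n, hn, rfl⟩ := h g
  exact ⟨a, ha, by rw [hχ, hN n hn, add_zero]⟩

end KernelContains

section KernelEq

variable (hN : ∀ g, χ g = 0 ↔ g ∈ N)
include hN

theorem mk_eq_mk_of_map_eq {a b : G} (h : χ a = χ b) : (a : G ⧸ N) = b := by
  rw [QuotientGroup.eq, ← hN, hχ.map_inv_mul, h, sub_self]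

theorem exists_map_eq_zpowers_of_image_eq [N.Normal] {r : ℝ} (hr : r ≠ 0)
    (h : χ '' H = {y | ∃ n : ℤ, y = n * r}) :
    ∃ z : G ⧸ N, H.map (mk' N) = Subgroup.zpowers z ∧ ¬ IsOfFinOrder z := by
  obtain ⟨a₀, ha₀, hr₀⟩ : r ∈ χ '' H := h ▸ ⟨1, by simp⟩
  refine ⟨a₀, le_antisymm ?_ ?_, fun hfin => ?_⟩
  · rintro _ ⟨a, ha, rfl⟩
    obtain ⟨n, hn⟩ := h.subset ⟨a, ha, rfl⟩
    refine Subgroup.mem_zpowers_iff.mpr ⟨n, ?_⟩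
    rw [← mk_zpow]
    exact hχ.mk_eq_mk_of_map_eq hN (by rw [hχ.map_zpow, hr₀, hn])
  · rw [Subgroup.zpowers_le]
    exact Subgroup.mem_map_of_mem _ ha₀
  · obtain ⟨n, hn, hpow⟩ := isOfFinOrder_iff_pow_eq_one.mp hfin
    have := (hN _).mpr ((eq_one_iff _).mp (by rwa [mk_pow]))
    rw [← zpow_natCast, hχ.map_zpow, hr₀, mul_eq_zero] at this
    exact this.elim (by positivity) hr

theorem forall_eq_mul_of_image_eq_range (h : χ '' H = Set.range χ) :
    ∀ g : G, ∃ a ∈ H, ∃ n ∈ N, g = a * n := by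
  intro g
  obtain ⟨a, ha, hag⟩ := h.superset ⟨g, rfl⟩
  exact ⟨a, ha, a⁻¹ * g, QuotientGroup.eq.mp (hχ.mk_eq_mk_of_map_eq hN hag), by group⟩

end KernelEq

end IsRealCharacter

theorem exists_injective_isRealCharacter (Q : Type*) [CommGroup Q] [Group.FG Q]
    [IsMulTorsionFree Q] : ∃ j : Q → ℝ, Function.Injective j ∧ IsRealCharacter j := by
  obtain ⟨f, hf⟩ := Module.exists_injective_linearMap_int_real (Additive Q)
  exact ⟨f ∘ Additive.ofMul, hf.comp Additive.ofMul.injective,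
    fun a b => map_add f (.ofMul a) (.ofMul b)⟩

theorem exists_isRealCharacter_forall_eq_zero_iff {G : Type*} [Group G] [Group.FG G]
    (N : Subgroup G) (hN : ∀ g : G, g ∈ N ↔ ∃ n : ℕ, 0 < n ∧ g ^ n ∈ commutator G) :
    ∃ χ : G → ℝ, IsRealCharacter χ ∧ ∀ g, χ g = 0 ↔ g ∈ N := by
  let π : G →* Abelianization G ⧸ CommGroup.torsion (Abelianization G) :=
    (mk' _).comp Abelianization.of
  have : Group.FG (Abelianization G ⧸ CommGroup.torsion (Abelianization G)) :=
    Group.fg_of_surjective (f := π) ((mk'_surjective _).comp (mk'_surjective _))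
  obtain ⟨j, hj, hjχ⟩ := exists_injective_isRealCharacter
    (Abelianization G ⧸ CommGroup.torsion (Abelianization G))
  refine ⟨j ∘ π, hjχ.comp π, fun g => ?_⟩
  rw [hN, ← Abelianization.of_mem_torsion_iff, ← eq_one_iff, ← hjχ.map_one]
  exact hj.eq_iff

/-- let `G` be finitely generated, `G'` its commutator subgroup and
`N ≥ G'` the subgroup with `N/G'` the torsion subgroup of `G/G'`.  Then:
(a) for every nonzero homomorphism `χ : G → (ℝ, +)` and every finite subgroup `K`,
`χ(N_G(K))` is `{0}`, infinite cyclic, or all of `χ(G)`;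
iff
(b) for every finite subgroup `K`, either `N_G(K) ⊆ N`, or the image of `N_G(K)` in
`G/N` is infinite cyclic, or `N_G(K)·N = G`. -/
theorem stmt9 {G : Type*} [Group G] (hfg : Group.FG G)
    (N : Subgroup G) [N.Normal]
    (hN : ∀ g : G, g ∈ N ↔ ∃ n : ℕ, 0 < n ∧ g ^ n ∈ commutator G) :
    (∀ χ : G → ℝ, (∀ a b : G, χ (a * b) = χ a + χ b) → (∃ g : G, χ g ≠ 0) →
      ∀ K : Subgroup G, (K : Set G).Finite →
        (χ '' ((Subgroup.normalizer (K : Set G)) : Set G) = {0}) ∨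
        (∃ r : ℝ, r ≠ 0 ∧ χ '' ((Subgroup.normalizer (K : Set G)) : Set G) = {y : ℝ | ∃ n : ℤ, y = n * r}) ∨
        (χ '' ((Subgroup.normalizer (K : Set G)) : Set G) = Set.range χ)) ↔
    (∀ K : Subgroup G, (K : Set G).Finite →
        ((Subgroup.normalizer (K : Set G)) ≤ N) ∨
        (∃ z : G ⧸ N, Subgroup.map (QuotientGroup.mk' N) (Subgroup.normalizer (K : Set G)) = Subgroup.zpowers z ∧
          ¬ IsOfFinOrder z) ∨
        (∀ g : G, ∃ a ∈ (Subgroup.normalizer (K : Set G)), ∃ n ∈ N, g = a * n)) := by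
  constructor
  · intro ha K hK
    obtain ⟨χ, hχ, hker⟩ := exists_isRealCharacter_forall_eq_zero_iff N hN
    by_cases hle : Subgroup.normalizer (K : Set G) ≤ N
    · exact Or.inl hle
    obtain ⟨w, -, hw⟩ := SetLike.not_le_iff_exists.mp hle
    rcases ha χ hχ ⟨w, (hker w).not.mpr hw⟩ K hK with h0 | ⟨r, hr, hcyc⟩ | hrange
    · exact absurd (fun a ha => (hker a).mp (h0.subset ⟨a, ha, rfl⟩)) hle
    · exact Or.inr <| Or.inl <| hχ.exists_map_eq_zpowers_of_image_eq hker hr hcyc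
    · exact Or.inr <| Or.inr <| hχ.forall_eq_mul_of_image_eq_range hker hrange
  · rintro hb χ (hχ : IsRealCharacter χ) - K hK
    have hχN : ∀ g ∈ N, χ g = 0 := fun g hg => by
      obtain ⟨n, hn, hgn⟩ := (hN g).mp hg
      exact hχ.map_eq_zero_of_pow_mem_commutator hn hgn
    rcases hb K hK with hle | ⟨z, hmap, -⟩ | hmul
    · exact Or.inl <| hχ.image_eq_zero_of_le hχN hle
    · obtain ⟨r, hr⟩ := hχ.exists_image_eq_of_map_eq_zpowers hχN hmap
      rcases eq_or_ne r 0 with rfl | hr0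
      · exact Or.inl <| hr.trans (by simp)
      · exact Or.inr <| Or.inl ⟨r, hr0, hr⟩
    · exact Or.inr <| Or.inr <| hχ.image_eq_range_of_forall_eq_mul hχN hmul
end

section
/- Let G be a group, χ : G → (ℝ, +) a nonzero homomorphism, and M = G_χ. Then M has finitely many conjugacy classes of finite subgroups (i.e., there exist finitely many finite subgroups K₁, …, K_s of G such that every finite subgroup L of G equals t⁻¹K_i t for some index i and some t ∈ ker χ) if and only if both of the following hold: (i) N_G(K)·ker χ has finite index in G for every finite subgroup K of G; (ii) G has finitely many conjugacy classes of finite subgroups. -/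
/-!
Let `G` act on its subgroups by conjugation and write `H = ker χ`, a normal subgroup. The
conjugates of a finite subgroup `K` form the orbit `G ⧸ N_G(K)`, and the `H`-classes in it are
the double cosets `N_G(K) \ G ⧸ H`, i.e. the cosets of the subgroup `N_G(K)·H`. Hence the finite
subgroups fall into finitely many `H`-classes iff they fall into finitely many `G`-classes, each
of which splits into finitely many `H`-classes.
-/

open Pointwise MulAction

namespace MulAction

variable {G X : Type*} [Group G] [MulAction G X]

theorem exists_finset_forall_eq_stabilizer_mul_mul {ι : Type*} [Finite ι] {H : Subgroup G}
    [H.Normal] {x : X} {r : ι → X} (hr : ∀ g : G, ∃ i, ∃ h ∈ H, g⁻¹ • x = h • r i) :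
    ∃ T : Finset G, ∀ g : G, ∃ t ∈ T, ∃ a ∈ stabilizer G x, ∃ b ∈ H, g = a * b * t := by
  choose f h hH hfh using hr
  refine ⟨(Set.finite_range (Function.invFun f)).toFinset, fun g => ?_⟩
  set t := Function.invFun f (f g)
  have hft : f t = f g := Function.invFun_eq ⟨g, rfl⟩
  refine ⟨t, by simp [t], g * h g * (h t)⁻¹ * t⁻¹, ?_, t * h t * (h g)⁻¹ * t⁻¹, ?_, by group⟩
  · rw [mem_stabilizer_iff, mul_smul, mul_smul, mul_smul, hfh, hft, inv_smul_smul, ← hfh,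
      smul_inv_smul]
  · simpa only [mul_assoc] using
      ‹H.Normal›.conj_mem _ (H.mul_mem (hH t) (H.inv_mem (hH g))) t

theorem inv_smul_eq_of_eq_mul_mul {x : X} {g a b t : G} (ha : a ∈ stabilizer G x)
    (hg : g = a * b * t) : g⁻¹ • x = (t⁻¹ * b * t)⁻¹ • t⁻¹ • x := by
  rw [← mul_smul, hg, show (a * b * t)⁻¹ = (t⁻¹ * b * t)⁻¹ * t⁻¹ * a⁻¹ by group, mul_smul,
    inv_smul_eq_iff.mpr ha.symm]

end MulAction

abbrev Subgroup.conjMulAction {G : Type*} [Group G] : MulAction G (Subgroup G) :=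
  MulAction.compHom _ MulAut.conj

attribute [local instance] Subgroup.conjMulAction

namespace Subgroup

variable {G : Type*} [Group G]

theorem stabilizer_eq_normalizer (K : Subgroup G) :
    stabilizer G K = normalizer (K : Set G) := by
  ext g
  rw [mem_stabilizer_iff, mem_normalizer_iff_map_conj_eq]
  rfl

theorem coe_inv_conj_smul (t : G) (K : Subgroup G) :
    ((t⁻¹ • K : Subgroup G) : Set G) = (fun a => t⁻¹ * a * t) '' K := by
  ext x
  show x ∈ MulAut.conj t⁻¹ • (K : Set G) ↔ _
  simp [Set.mem_smul_set]

def FinitelyManyConjClassesOfFinite (H : Subgroup G) : Prop :=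
  ∃ (s : ℕ) (Ks : Fin s → Subgroup G), (∀ i, (Ks i : Set G).Finite) ∧
    ∀ L : Subgroup G, (L : Set G).Finite → ∃ i, ∃ t ∈ H, t⁻¹ • Ks i = L

namespace FinitelyManyConjClassesOfFinite

variable {H : Subgroup G}

theorem of_finite {ι : Type*} [Finite ι] (Ks : ι → Subgroup G) (hfin : ∀ i, (Ks i : Set G).Finite)
    (hcl : ∀ L : Subgroup G, (L : Set G).Finite → ∃ i, ∃ t ∈ H, t⁻¹ • Ks i = L) :
    FinitelyManyConjClassesOfFinite H := by
  obtain ⟨s, ⟨e⟩⟩ := Finite.exists_equiv_fin ι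
  refine ⟨s, Ks ∘ e.symm, fun i => hfin _, fun L hL => ?_⟩
  obtain ⟨i, t, ht, rfl⟩ := hcl L hL
  exact ⟨e i, t, ht, by simp⟩

theorem mono {H' : Subgroup G} (hH : H ≤ H') (h : FinitelyManyConjClassesOfFinite H) :
    FinitelyManyConjClassesOfFinite H' := by
  obtain ⟨s, Ks, hfin, hcl⟩ := h
  refine ⟨s, Ks, hfin, fun L hL => ?_⟩
  obtain ⟨i, t, ht, hL⟩ := hcl L hL
  exact ⟨i, t, hH ht, hL⟩

end FinitelyManyConjClassesOfFinite

theorem finitelyManyConjClassesOfFinite_iff (H : Subgroup G) [H.Normal] :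
    FinitelyManyConjClassesOfFinite H ↔
      (∀ K : Subgroup G, (K : Set G).Finite → ∃ T : Finset G, ∀ g : G,
          ∃ t ∈ T, ∃ a ∈ normalizer (K : Set G), ∃ b ∈ H, g = a * b * t) ∧
        FinitelyManyConjClassesOfFinite (⊤ : Subgroup G) := by
  constructor
  · intro h
    refine ⟨fun K hK => ?_, h.mono le_top⟩
    obtain ⟨s, Ks, -, hcl⟩ := h
    simp_rw [← stabilizer_eq_normalizer]
    refine exists_finset_forall_eq_stabilizer_mul_mul (r := Ks) fun g => ?_
    obtain ⟨i, t, ht, hL⟩ := hcl (g⁻¹ • K) (by rw [coe_inv_conj_smul]; exact hK.image _)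
    exact ⟨i, t⁻¹, H.inv_mem ht, hL.symm⟩
  · rintro ⟨hcover, s, Ks, hfin, hcl⟩
    choose T hT using fun i => hcover (Ks i) (hfin i)
    refine .of_finite (fun p : Σ i, T i => (p.2 : G)⁻¹ • Ks p.1)
      (fun p => by rw [coe_inv_conj_smul]; exact (hfin _).image _) fun L hL => ?_
    obtain ⟨i, g, -, rfl⟩ := hcl L hL
    obtain ⟨t, htT, a, ha, b, hb, hg⟩ := hT i g
    rw [← stabilizer_eq_normalizer] at ha
    exact ⟨⟨i, t, htT⟩, t⁻¹ * b * t, ‹H.Normal›.conj_mem' b hb t,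
      (inv_smul_eq_of_eq_mul_mul ha hg).symm⟩

end Subgroup

theorem stmt10_general {G : Type*} [Group G] (χ : G → ℝ)
    (hhom : ∀ a b : G, χ (a * b) = χ a + χ b) :
    (∃ (s : ℕ) (Ks : Fin s → Subgroup G), (∀ i, ((Ks i : Set G)).Finite) ∧
        ∀ L : Subgroup G, (L : Set G).Finite →
          ∃ (i : Fin s) (t : G), χ t = 0 ∧
            (fun a => t⁻¹ * a * t) '' (Ks i : Set G) = (L : Set G)) ↔
    ((∀ K : Subgroup G, (K : Set G).Finite →
        ∃ T : Finset G, ∀ g : G, ∃ t ∈ T, ∃ a ∈ Subgroup.normalizer (K : Set G), ∃ b : G,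
          χ b = 0 ∧ g = a * b * t) ∧
      (∃ (s : ℕ) (Ks : Fin s → Subgroup G), (∀ i, ((Ks i : Set G)).Finite) ∧
        ∀ L : Subgroup G, (L : Set G).Finite →
          ∃ (i : Fin s) (t : G),
            (fun a => t⁻¹ * a * t) '' (Ks i : Set G) = (L : Set G))) := by
  let ker : Subgroup G := (MonoidHom.mk' (Multiplicative.ofAdd ∘ χ) hhom).ker
  have mem_ker (t : G) : t ∈ ker ↔ χ t = 0 := ofAdd_eq_one
  simpa only [Subgroup.FinitelyManyConjClassesOfFinite, ← Subgroup.coe_inv_conj_smul,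
    SetLike.coe_set_eq, mem_ker, Subgroup.mem_top, true_and] using
    Subgroup.finitelyManyConjClassesOfFinite_iff ker

/-- for a group `G` and a nonzero homomorphism `χ : G → (ℝ, +)`, the
monoid `M = G_χ` has finitely many conjugacy classes of finite subgroups (conjugating
by its invertible elements, i.e. by elements of `ker χ`) iff
(i) `N_G(K)·ker χ` has finite index in `G` for every finite subgroup `K`, and
(ii) `G` has finitely many conjugacy classes of finite subgroups. -/
theorem stmt10 {G : Type*} [Group G] (χ : G → ℝ)
    (hhom : ∀ a b : G, χ (a * b) = χ a + χ b) (hne : ∃ g : G, χ g ≠ 0) :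
    (∃ (s : ℕ) (Ks : Fin s → Subgroup G), (∀ i, ((Ks i : Set G)).Finite) ∧
        ∀ L : Subgroup G, (L : Set G).Finite →
          ∃ (i : Fin s) (t : G), χ t = 0 ∧
            (fun a => t⁻¹ * a * t) '' (Ks i : Set G) = (L : Set G)) ↔
    ((∀ K : Subgroup G, (K : Set G).Finite →
        ∃ T : Finset G, ∀ g : G, ∃ t ∈ T, ∃ a ∈ Subgroup.normalizer (K : Set G), ∃ b : G,
          χ b = 0 ∧ g = a * b * t) ∧
      (∃ (s : ℕ) (Ks : Fin s → Subgroup G), (∀ i, ((Ks i : Set G)).Finite) ∧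
        ∀ L : Subgroup G, (L : Set G).Finite →
          ∃ (i : Fin s) (t : G),
            (fun a => t⁻¹ * a * t) '' (Ks i : Set G) = (L : Set G))) :=
  stmt10_general χ hhom
end

section
/- Let M be a cancellative monoid that conjugates finite subgroups. Suppose there exist finitely many finite subgroups H₁, …, H_s of M such that for each finite subgroup K of M there are an element m ∈ M and an index i with Km ⊆ mH_i. Then M has finitely many conjugacy classes of finite subgroups: there exist finitely many finite subgroups K₁, …, K_r of M such that every finite subgroup L of M satisfies L = t⁻¹K_j t for some index j and some invertible t ∈ M. -/
/-- a cancellative monoid `M` which conjugates finite subgroups and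
admits finitely many finite subgroups `H₁, …, H_s` such that every finite subgroup `K`
satisfies `Km ⊆ mH_i` for some `m` and `i`, has finitely many conjugacy classes of
finite subgroups. -/
theorem stmt11 {M : Type*} [CancelMonoid M]
    (hconj : ∀ H₁ H₂ : Set M, IsFiniteSubgroup H₁ → IsFiniteSubgroup H₂ → ∀ g : M,
      mulRight H₁ g = mulLeft g H₂ →
        ∃ h h' : M, h * h' = 1 ∧ h' * h = 1 ∧ (fun a => h' * a * h) '' H₁ = H₂)
    (hfin : ∃ (s : ℕ) (Hs : Fin s → Set M), (∀ i, IsFiniteSubgroup (Hs i)) ∧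
      ∀ K : Set M, IsFiniteSubgroup K →
        ∃ (m : M) (i : Fin s), mulRight K m ⊆ mulLeft m (Hs i)) :
    ∃ (r : ℕ) (Ks : Fin r → Set M), (∀ j, IsFiniteSubgroup (Ks j)) ∧
      ∀ L : Set M, IsFiniteSubgroup L →
        ∃ (j : Fin r) (t t' : M), t * t' = 1 ∧ t' * t = 1 ∧
          (fun a => t' * a * t) '' (Ks j) = L := by
  classical
  obtain ⟨s, Hs, hHs, hcover⟩ := hfin
  -- the collection of all subgroups contained in some `Hs i`
  set 𝒮 : Set (Set M) := {S | (∃ i, S ⊆ Hs i) ∧ IsSubgroupSet S} with h𝒮def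
  have hfin𝒮 : 𝒮.Finite := by
    have hsub : 𝒮 ⊆ ⋃ i, {T : Set M | T ⊆ Hs i} := by
      rintro S ⟨⟨i, hi⟩, -⟩
      exact Set.mem_iUnion.2 ⟨i, hi⟩
    exact (Set.finite_iUnion (fun i => (hHs i).2.finite_subsets)).subset hsub
  haveI : Fintype 𝒮 := hfin𝒮.fintype
  let e := Fintype.equivFin 𝒮
  refine ⟨Fintype.card 𝒮, fun j => ((e.symm j : 𝒮) : Set M), ?_, ?_⟩
  · intro j
    obtain ⟨⟨i, hi⟩, hsg⟩ := (e.symm j).2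
    exact ⟨hsg, (hHs i).2.subset hi⟩
  · intro L hL
    obtain ⟨m, i, hmi⟩ := hcover L hL
    -- the subgroup `S ⊆ Hs i` with `Lm = mS`
    set S : Set M := {x | x ∈ Hs i ∧ m * x ∈ mulRight L m} with hSdef
    have hSsub : S ⊆ Hs i := fun x hx => hx.1
    have hSsg : IsSubgroupSet S := by
      refine ⟨⟨(hHs i).1.1, ⟨1, hL.1.1, by simp⟩⟩, ?_, ?_⟩
      · rintro x ⟨hxH, k₁, hk₁, e₁⟩ y ⟨hyH, k₂, hk₂, e₂⟩
        simp only at e₁ e₂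
        refine ⟨(hHs i).1.2.1 x hxH y hyH, k₁ * k₂, hL.1.2.1 k₁ hk₁ k₂ hk₂, ?_⟩
        show k₁ * k₂ * m = m * (x * y)
        calc k₁ * k₂ * m = k₁ * (k₂ * m) := by rw [mul_assoc]
          _ = k₁ * (m * y) := by rw [e₂]
          _ = (k₁ * m) * y := by rw [mul_assoc]
          _ = (m * x) * y := by rw [e₁]
          _ = m * (x * y) := by rw [mul_assoc]
      · rintro x ⟨hxH, k, hk, ekm⟩
        simp only at ekm
        obtain ⟨k', hk', hkk', hk'k⟩ := hL.1.2.2 k hk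
        have hk'm : k' * m ∈ mulRight L m := ⟨k', hk', rfl⟩
        obtain ⟨y, hy, ey⟩ := hmi hk'm
        simp only at ey
        -- ey : m * y = k' * m
        refine ⟨y, ⟨hy, k', hk', ey.symm⟩, ?_, ?_⟩
        · apply mul_left_cancel (a := m)
          calc m * (x * y) = (m * x) * y := by rw [mul_assoc]
            _ = (k * m) * y := by rw [ekm]
            _ = k * (m * y) := by rw [mul_assoc]
            _ = k * (k' * m) := by rw [ey]
            _ = (k * k') * m := by rw [mul_assoc]
            _ = m * 1 := by rw [hkk', one_mul, mul_one]
        · apply mul_left_cancel (a := m)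
          calc m * (y * x) = (m * y) * x := by rw [mul_assoc]
            _ = (k' * m) * x := by rw [ey]
            _ = k' * (m * x) := by rw [mul_assoc]
            _ = k' * (k * m) := by rw [ekm]
            _ = (k' * k) * m := by rw [mul_assoc]
            _ = m * 1 := by rw [hk'k, one_mul, mul_one]
    have hSfin : S.Finite := (hHs i).2.subset hSsub
    have heq : mulRight L m = mulLeft m S := by
      apply Set.Subset.antisymm
      · rintro x ⟨k, hk, rfl⟩
        have hkm : k * m ∈ mulRight L m := ⟨k, hk, rfl⟩
        obtain ⟨y, hy, ey⟩ := hmi hkm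
        exact ⟨y, ⟨hy, k, hk, ey.symm⟩, ey⟩
      · rintro x ⟨y, ⟨hyH, hym⟩, rfl⟩
        exact hym
    have hSmem : S ∈ 𝒮 := ⟨⟨i, hSsub⟩, hSsg⟩
    obtain ⟨h, h', h1, h2, himg⟩ := hconj L S hL ⟨hSsg, hSfin⟩ m heq
    refine ⟨e ⟨S, hSmem⟩, h', h, h2, h1, ?_⟩
    have hKs : ((e.symm (e ⟨S, hSmem⟩) : 𝒮) : Set M) = S := by
      rw [Equiv.symm_apply_apply]
    dsimp only
    rw [hKs, ← himg, ← Set.image_comp]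
    have hid : ((fun a => h * a * h') ∘ (fun a => h' * a * h)) = id := by
      funext a
      simp only [Function.comp, id]
      calc h * (h' * a * h) * h' = (h * h') * (a * (h * h')) := by
            simp only [mul_assoc]
        _ = a := by rw [h1, one_mul, mul_one]
    rw [hid, Set.image_id]
end

section
/- Let G be a group which is an internal semidirect product G = K ⋉ H, i.e., H is a normal subgroup of G, K is a finite subgroup of G, K ∩ H = {1}, and KH = G. Then a homomorphism ν : H → (ℝ, +) extends to a homomorphism G → (ℝ, +) if and only if ν is invariant under the conjugation action of G, i.e., ν(g⁻¹hg) = ν(h) for all g ∈ G and h ∈ H. -/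
/-- let `G = K ⋉ H` be an internal semidirect product (`H ⊴ G`, `K`
finite, `K ∩ H = 1`, `KH = G`).  A homomorphism `ν : H → (ℝ, +)` extends to `G` iff it
is invariant under the conjugation action of `G`, i.e. `ν(g⁻¹hg) = ν(h)` for all
`g ∈ G`, `h ∈ H`. -/
theorem stmt13 {G : Type*} [Group G] (K H : Subgroup G) (hHn : H.Normal)
    (hKfin : (K : Set G).Finite) (hint : K ⊓ H = ⊥)
    (hprod : ∀ g : G, ∃ k ∈ K, ∃ h ∈ H, g = k * h)
    (ν : H → ℝ) (hν : ∀ a b : H, ν (a * b) = ν a + ν b) :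
    (∃ χ : G → ℝ, (∀ a b : G, χ (a * b) = χ a + χ b) ∧ ∀ h : H, χ h = ν h) ↔
    (∀ (g : G) (h : H),
      ν ⟨g⁻¹ * h * g, by simpa using hHn.conj_mem h h.2 g⁻¹⟩ = ν h) := by
  constructor
  · rintro ⟨χ, hadd, hext⟩ g h
    have h1 : χ 1 = 0 := by
      have := hadd 1 1; simp at this; linarith
    have hinv : ∀ x : G, χ x⁻¹ = -χ x := by
      intro x
      have := hadd x⁻¹ x; simp [h1] at this; linarith
    have e1 : ν ⟨g⁻¹ * ↑h * g, by simpa using hHn.conj_mem h h.2 g⁻¹⟩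
        = χ (g⁻¹ * ↑h * g) := (hext _).symm
    rw [e1, hadd, hadd, hinv, hext h]
    ring
  · intro hinvar
    choose k hk h hh hg using hprod
    have key : ∀ (k1 h1 k2 h2 : G), k1 ∈ K → h1 ∈ H → k2 ∈ K → h2 ∈ H →
        k1 * h1 = k2 * h2 → h1 = h2 := by
      intro k1 h1 k2 h2 hk1 hh1 hk2 hh2 heq
      have hx : k2⁻¹ * k1 = h2 * h1⁻¹ := by
        have h' : k2⁻¹ * (k1 * h1) = h2 := by rw [heq]; group
        rw [← h']; group
      have hmem : k2⁻¹ * k1 ∈ K ⊓ H := by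
        refine Subgroup.mem_inf.mpr ⟨mul_mem (inv_mem hk2) hk1, ?_⟩
        rw [hx]; exact mul_mem hh2 (inv_mem hh1)
      rw [hint, Subgroup.mem_bot] at hmem
      have : h2 * h1⁻¹ = 1 := by rw [← hx, hmem]
      have := mul_inv_eq_one.mp this
      exact this.symm
    refine ⟨fun g => ν ⟨h g, hh g⟩, ?_, ?_⟩
    · intro a b
      have hconj : (k b)⁻¹ * h a * k b ∈ H := by
        simpa using hHn.conj_mem (h a) (hh a) (k b)⁻¹
      have hdec : a * b = (k a * k b) * (((k b)⁻¹ * h a * k b) * h b) := by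
        conv_lhs => rw [hg a, hg b]
        group
      have heq : h (a * b) = ((k b)⁻¹ * h a * k b) * h b :=
        key _ _ _ _ (hk (a*b)) (hh (a*b)) (mul_mem (hk a) (hk b))
          (mul_mem hconj (hh b)) (by rw [← hg (a*b)]; exact hdec)
      have : (⟨h (a*b), hh (a*b)⟩ : H)
          = (⟨(k b)⁻¹ * h a * k b, hconj⟩ : H) * ⟨h b, hh b⟩ := by
        ext; simpa using heq
      show ν ⟨h (a*b), hh (a*b)⟩ = ν ⟨h a, hh a⟩ + ν ⟨h b, hh b⟩
      rw [this, hν]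
      have := hinvar (k b) ⟨h a, hh a⟩
      simp only at this
      rw [this]
    · intro h0
      have heq : h ↑h0 = ↑h0 :=
        key _ _ _ _ (hk ↑h0) (hh ↑h0) (one_mem K) h0.2 (by rw [← hg ↑h0, one_mul])
      show ν ⟨h ↑h0, hh ↑h0⟩ = ν h0
      have : (⟨h ↑h0, hh ↑h0⟩ : H) = h0 := Subtype.ext heq
      rw [this]
end
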